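/- arXiv:2602.03289 — 3 statements merged into one kernel-verified Lean document; each statement's English description precedes it below -/
import Mathlib

section
/- Let K = F(y), let τ₁,…,τ_r be elements of G^τ, and let τ̄₁,…,τ̄_r be automorphisms of the algebraic closure of K(z) whose restrictions to K(z) equal τ₁,…,τ_r (arising from arbitrary extensions of the τ_{q,z_i} to automorphisms of the algebraic closure over the algebraic closure of K). Then f ∈ K(z) satisfies f = Σ_{i=1}^r (τ̄_i(ḡ_i) − ḡ_i) for some ḡ₁,…,ḡ_r in the algebraic closure of K(z) if and only if f = Σ_{i=1}^r (τ_i(g_i) − g_i) for some g₁,…,g_r ∈ K(z). -/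
/-!
In characteristic zero every element `a` algebraic over `L` has a normalized trace
`-(minpoly L a).nextCoeff / deg (minpoly L a)`, which equals `Tr_{M/L}(a) / [M : L]` for every
finite extension `M` containing `a`. Computing in `L⟮a, b⟯` shows it is additive; it is the
identity on `L`, and it commutes with any automorphism of `A` extending one of `L`, since such
an automorphism transports minimal polynomials. Applying it to `f = Σ (τ̄ᵢ ḡᵢ - ḡᵢ)` gives
`f = Σ (τᵢ gᵢ - gᵢ)` with `gᵢ` the normalized trace of `ḡᵢ`.
-/

noncomputable section

/-- The field of rational functions `F(x₁,…,xₙ)`, modeled as the fraction field of the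
multivariate polynomial ring. -/
abbrev MvRat (F : Type*) [Field F] (n : ℕ) := FractionRing (MvPolynomial (Fin n) F)

/-- The image of the variable `xᵢ` in `F(x₁,…,xₙ)`. -/
def xv {F : Type*} [Field F] {n : ℕ} (i : Fin n) : MvRat F n :=
  algebraMap (MvPolynomial (Fin n) F) (MvRat F n) (MvPolynomial.X i)

/-- The subfield `F(x₂,…,xₙ)` of `F(x₁,…,xₙ)` (the variable `x₁` has index `0`). -/
def hatField (F : Type*) [Field F] (n : ℕ) [NeZero n] : Subfield (MvRat F n) :=
  Subfield.closure (Set.range (algebraMap F (MvRat F n)) ∪ (xv '' {i : Fin n | i ≠ 0}))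

/-- `a` is a polynomial in `x1` over the subfield `E` of degree `< D`. -/
def IsPolyDeg {L : Type*} [Field L] (E : Subfield L) (x1 : L) (D : ℕ) (a : L) : Prop :=
  ∃ cf : Fin D → E, a = ∑ k : Fin D, (cf k : L) * x1 ^ (k : ℕ)

/-- `a` is a polynomial in `x1` over the subfield `E`, i.e. `a ∈ E[x1]`. -/
def IsPolyE {L : Type*} [Field L] (E : Subfield L) (x1 a : L) : Prop :=
  ∃ D : ℕ, IsPolyDeg E x1 D a

/-- `a` is a Laurent polynomial in `x1` over the subfield `E`, i.e. `a ∈ E[x1, x1⁻¹]`. -/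
def IsLaurent {L : Type*} [Field L] (E : Subfield L) (x1 a : L) : Prop :=
  ∃ (s : Finset ℤ) (cf : ℤ → L), (∀ k ∈ s, cf k ∈ E) ∧ a = ∑ k ∈ s, cf k * x1 ^ k

/-- For a family `θ` of `F`-automorphisms and an exponent vector `α`,
the product `∏ i, θᵢ^(αᵢ)` (the element `θ_x^α` of the group generated by the `θᵢ`). -/
def thetaPowS {F L : Type*} [CommSemiring F] [Semiring L] [Algebra F L] {ι : Type*} [Fintype ι]
    (θ : ι → (L ≃ₐ[F] L)) (α : ι → ℤ) : L ≃ₐ[F] L :=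
  (Finset.univ.toList.map fun i => θ i ^ α i).prod

/-- Membership in the space `V_{[d]_G,j}`: `f` is a finite sum of fractions `a_g / g(d)^j`
with `g` in the group `G` and `a_g ∈ E[x₁]` of degree `< D` (`= deg_{x₁} d`). -/
def MemV {F L : Type*} [Field F] [Field L] [Algebra F L] (G : Set (L ≃ₐ[F] L))
    (E : Subfield L) (x1 : L) (dd : L) (D j : ℕ) (f : L) : Prop :=
  ∃ s : Finset (L ≃ₐ[F] L), ↑s ⊆ G ∧ ∃ a : (L ≃ₐ[F] L) → L,
    (∀ g ∈ s, IsPolyDeg E x1 D (a g)) ∧ f = ∑ g ∈ s, a g / (g dd) ^ j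

/-- `p` and `p'` are `G`-equivalent: `p = c · g(p')` for some nonzero `c ∈ F` and `g ∈ G`. -/
def GEquivSet {F L : Type*} [Field F] [Field L] [Algebra F L] (G : Set (L ≃ₐ[F] L))
    (p p' : L) : Prop :=
  ∃ c : F, c ≠ 0 ∧ ∃ g ∈ G, p = algebraMap F L c * g p'

/-- `w` divides `p` inside the ring `E[x1]`. -/
def DvdE {L : Type*} [Field L] (E : Subfield L) (x1 w p : L) : Prop :=
  ∃ u : L, IsPolyE E x1 u ∧ p = w * u

/-- `p ∈ E[x₁]` is normal w.r.t. `θ1`: `gcd(p, θ1^ℓ(p)) = 1` for all nonzero `ℓ ∈ ℤ`,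
i.e. every common divisor (in `E[x₁]`) of `p` and `θ1^ℓ(p)` is a unit (lies in `E`). -/
def NormalWrt {F L : Type*} [Field F] [Field L] [Algebra F L] (E : Subfield L) (x1 : L)
    (θ1 : L ≃ₐ[F] L) (p : L) : Prop :=
  ∀ ℓ : ℤ, ℓ ≠ 0 → ∀ w : L, IsPolyE E x1 w →
    DvdE E x1 w p → DvdE E x1 w ((θ1 ^ ℓ) p) → w ∈ E

/-- The isotropy group of `p` (in exponent-vector coordinates): the subgroup of `ℤ^ι`
of all `α` with `Θ(α)(p) = c·p` for some nonzero `c ∈ F`. -/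
def isotropyZ {F L : Type*} [Field F] [Field L] [Algebra F L] {ι : Type*}
    (Θ : (ι → ℤ) → (L ≃ₐ[F] L))
    (hadd : ∀ α β, Θ (α + β) = Θ α * Θ β) (h0 : Θ 0 = 1) (p : L) :
    AddSubgroup (ι → ℤ) where
  carrier := {α | ∃ c : F, c ≠ 0 ∧ Θ α p = algebraMap F L c * p}
  zero_mem' := ⟨1, one_ne_zero, by simp [h0]⟩
  add_mem' := by
    rintro α β ⟨c, hc, hcp⟩ ⟨e, he, hep⟩
    refine ⟨e * c, mul_ne_zero he hc, ?_⟩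
    rw [hadd, AlgEquiv.mul_apply, hep, map_mul, AlgEquiv.commutes, hcp, map_mul]
    ring
  neg_mem' := by
    rintro α ⟨c, hc, hcp⟩
    refine ⟨c⁻¹, inv_ne_zero hc, ?_⟩
    have h1 : Θ (-α) (Θ α p) = p := by
      rw [← AlgEquiv.mul_apply, ← hadd, neg_add_cancel, h0, AlgEquiv.one_apply]
    rw [hcp, map_mul, AlgEquiv.commutes] at h1
    have hc0 : (algebraMap F L) c ≠ 0 :=
      (map_ne_zero_iff _ (algebraMap F L).injective).mpr hc
    rw [map_inv₀, eq_inv_mul_iff_mul_eq₀ hc0]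
    exact h1

end

noncomputable section NormalizedTrace

open Polynomial IntermediateField Module

variable (L : Type*) {A : Type*} [Field L] [Field A] [Algebra L A]

-- Junk value `0` when `a` is not integral over `L`, since then `minpoly L a = 0`.
def normalizedTrace (a : A) : L :=
  -(minpoly L a).nextCoeff / (minpoly L a).natDegree

variable {L}

@[simp]
lemma normalizedTrace_algebraMap (c : L) : normalizedTrace L (algebraMap L A c) = c := by
  simp [normalizedTrace, minpoly.eq_X_sub_C, nextCoeff_X_sub_C]

lemma normalizedTrace_algebraMap_eq_trace [CharZero L] {M : Type*} [Field M] [Algebra L M]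
    [Algebra M A] [IsScalarTower L M A] [FiniteDimensional L M] (z : M) :
    normalizedTrace L (algebraMap M A z) = (finrank L M : L)⁻¹ * Algebra.trace L M z := by
  have hz : IsIntegral L z := .of_finite L z
  have hdeg : finrank L M = (minpoly L z).natDegree * finrank L⟮z⟯ M := by
    rw [← adjoin.finrank hz, finrank_mul_finrank]
  have hdeg₀ : (minpoly L z).natDegree ≠ 0 := (minpoly.natDegree_pos hz).ne'
  have hrank₀ : finrank L⟮z⟯ M ≠ 0 := finrank_pos.ne'
  rw [normalizedTrace, minpoly.algebraMap_eq (algebraMap M A).injective,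
    trace_eq_finrank_mul_minpoly_nextCoeff, hdeg]
  push_cast
  field_simp

lemma normalizedTrace_add [CharZero L] {a b : A} (ha : IsIntegral L a) (hb : IsIntegral L b) :
    normalizedTrace L (a + b) = normalizedTrace L a + normalizedTrace L b := by
  have := finiteDimensional_adjoin_pair ha hb
  let a' : L⟮a, b⟯ := ⟨a, subset_adjoin L _ (by simp)⟩
  let b' : L⟮a, b⟯ := ⟨b, subset_adjoin L _ (by simp)⟩
  change normalizedTrace L (algebraMap _ A (a' + b')) =
    normalizedTrace L (algebraMap _ A a') + normalizedTrace L (algebraMap _ A b')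
  rw [normalizedTrace_algebraMap_eq_trace, normalizedTrace_algebraMap_eq_trace,
    normalizedTrace_algebraMap_eq_trace, map_add, mul_add]

lemma minpoly_ringEquiv_apply (σ : L ≃+* L) (σA : A ≃+* A)
    (hσ : ∀ x : L, σA (algebraMap L A x) = algebraMap L A (σ x)) {a : A}
    (ha : IsIntegral L a) :
    minpoly L (σA a) = (minpoly L a).map (σ : L →+* L) := by
  have hcomm : (algebraMap L A).comp (σ : L →+* L) = (σA : A →+* A).comp (algebraMap L A) := by
    ext x; simp [hσ]
  refine (minpoly.eq_of_irreducible_of_monic ?_ ?_ ((minpoly.monic ha).map _)).symm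
  · exact (MulEquiv.irreducible_iff (mapEquiv σ)).mpr (minpoly.irreducible ha)
  · rw [aeval_def, eval₂_map, hcomm, ← RingHom.coe_coe σA, ← hom_eval₂, ← aeval_def,
      minpoly.aeval, map_zero]

lemma normalizedTrace_ringEquiv_apply (σ : L ≃+* L) (σA : A ≃+* A)
    (hσ : ∀ x : L, σA (algebraMap L A x) = algebraMap L A (σ x)) {a : A}
    (ha : IsIntegral L a) :
    normalizedTrace L (σA a) = σ (normalizedTrace L a) := by
  rw [normalizedTrace, normalizedTrace, minpoly_ringEquiv_apply σ σA hσ ha,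
    natDegree_map, nextCoeff_map σ.injective, map_div₀, map_neg, map_natCast]
  rfl

variable (L A) in
def normalizedTraceHom [CharZero L] [Algebra.IsAlgebraic L A] : A →+ L :=
  AddMonoidHom.mk' (normalizedTrace L) fun a b =>
    normalizedTrace_add (Algebra.IsIntegral.isIntegral a) (Algebra.IsIntegral.isIntegral b)

def IsSummableBy {R ι : Type*} [Ring R] [Fintype ι] (θ : ι → R ≃+* R) (f : R) : Prop :=
  ∃ g : ι → R, f = ∑ i, (θ i (g i) - g i)

theorem isSummableBy_algebraMap_iff [CharZero L] [Algebra.IsAlgebraic L A] {ι : Type*}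
    [Fintype ι] (σ : ι → L ≃+* L) (σA : ι → A ≃+* A)
    (hσ : ∀ i x, σA i (algebraMap L A x) = algebraMap L A (σ i x)) (f : L) :
    IsSummableBy σA (algebraMap L A f) ↔ IsSummableBy σ f := by
  constructor
  · rintro ⟨g, hg⟩
    refine ⟨fun i => normalizedTrace L (g i), ?_⟩
    have := congrArg (normalizedTraceHom L A) hg
    simpa only [map_sum, map_sub, normalizedTraceHom, AddMonoidHom.mk'_apply,
      normalizedTrace_algebraMap,
      normalizedTrace_ringEquiv_apply _ _ (hσ _) (Algebra.IsIntegral.isIntegral _)]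
      using this
  · rintro ⟨g, rfl⟩
    exact ⟨fun i => algebraMap L A (g i), by simp [hσ]⟩

end NormalizedTrace

theorem stmt_13_general {F : Type*} [Field F] [CharZero F] {k m : ℕ}
    (r : ℕ)
    (τ : Fin r → (MvRat (MvRat F k) m ≃ₐ[MvRat F k] MvRat (MvRat F k) m))
    (τbar : Fin r → (AlgebraicClosure (MvRat (MvRat F k) m) ≃+*
      AlgebraicClosure (MvRat (MvRat F k) m)))
    (hτbar : ∀ (i : Fin r) (x : MvRat (MvRat F k) m),
      τbar i (algebraMap (MvRat (MvRat F k) m) (AlgebraicClosure (MvRat (MvRat F k) m)) x) =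
        algebraMap (MvRat (MvRat F k) m) (AlgebraicClosure (MvRat (MvRat F k) m)) (τ i x))
    (f : MvRat (MvRat F k) m) :
    (∃ g : Fin r → AlgebraicClosure (MvRat (MvRat F k) m),
        algebraMap (MvRat (MvRat F k) m) (AlgebraicClosure (MvRat (MvRat F k) m)) f =
          ∑ i : Fin r, (τbar i (g i) - g i)) ↔
    (∃ g : Fin r → MvRat (MvRat F k) m,
        f = ∑ i : Fin r, (τ i (g i) - g i)) :=
  isSummableBy_algebraMap_iff (fun i => (τ i).toRingEquiv) τbar hτbar f

set_option maxHeartbeats 2000000 in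
set_option synthInstance.maxHeartbeats 1000000 in
/-- **Lemma: q-summability descends from the algebraic closure.** Let
`K = F(y)`, let `τ₁,…,τ_r ∈ G^τ`, and let `τ̄₁,…,τ̄_r` be automorphisms of the algebraic
closure of `K(z)` restricting to `τ₁,…,τ_r` on `K(z)`. Then `f ∈ K(z)` satisfies
`f = Σᵢ (τ̄ᵢ(ḡᵢ) − ḡᵢ)` with `ḡᵢ` in the algebraic closure iff
`f = Σᵢ (τᵢ(gᵢ) − gᵢ)` with `gᵢ ∈ K(z)`. -/
theorem stmt_13 {F : Type*} [Field F] [CharZero F] {k m : ℕ}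
    (q : F) (hq0 : q ≠ 0) (hq : ∀ l : ℤ, l ≠ 0 → q ^ l ≠ 1)
    (τgen : Fin m → (MvRat (MvRat F k) m ≃ₐ[MvRat F k] MvRat (MvRat F k) m))
    (hτgen : ∀ i : Fin m, τgen i (xv i) =
      algebraMap F (MvRat (MvRat F k) m) q * xv i)
    (hτgenfix : ∀ i l : Fin m, i ≠ l → τgen i (xv l) = xv l)
    (r : ℕ)
    (τ : Fin r → (MvRat (MvRat F k) m ≃ₐ[MvRat F k] MvRat (MvRat F k) m))
    (hτ : ∀ i : Fin r, τ i ∈ Subgroup.closure (Set.range τgen))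
    (τbar : Fin r → (AlgebraicClosure (MvRat (MvRat F k) m) ≃+*
      AlgebraicClosure (MvRat (MvRat F k) m)))
    (hτbar : ∀ (i : Fin r) (x : MvRat (MvRat F k) m),
      τbar i (algebraMap (MvRat (MvRat F k) m) (AlgebraicClosure (MvRat (MvRat F k) m)) x) =
        algebraMap (MvRat (MvRat F k) m) (AlgebraicClosure (MvRat (MvRat F k) m)) (τ i x))
    (f : MvRat (MvRat F k) m) :
    (∃ g : Fin r → AlgebraicClosure (MvRat (MvRat F k) m),
        algebraMap (MvRat (MvRat F k) m) (AlgebraicClosure (MvRat (MvRat F k) m)) f =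
          ∑ i : Fin r, (τbar i (g i) - g i)) ↔
    (∃ g : Fin r → MvRat (MvRat F k) m,
        f = ∑ i : Fin r, (τ i (g i) - g i)) :=
  stmt_13_general r τ τbar hτbar f
end

section
/- For all positive integers s and n, the rational function f = 1/(x₁^s + ⋯ + xₙ^s) ∈ ℚ(x₁,…,xₙ) is (τ_{q,x₁},…,τ_{q,xₙ})-summable: there exist g₁,…,gₙ ∈ ℚ(x₁,…,xₙ) with f = Σ_{i=1}^n (τ_{q,x_i}(g_i) − g_i). In particular, for n > 1 one may take g_i = τ_{q,x_{i+1}}···τ_{q,xₙ}(b/d) with b = 1/(q^{−s} − 1) and d = x₁^s + ⋯ + xₙ^s. -/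
/-!
Put `θᵢ = τᵢ₊₁ ⋯ τₙ` and let `Dₘ` be the power sum `x₁^s + ⋯ + xₙ^s` in which the variables of
index `≥ m` are replaced by `q·xₗ`, so that `θᵢ(d) = Dᵢ₊₁`, `τᵢ(Dᵢ₊₁) = Dᵢ`, `D₀ = q^s·d` and
`Dₙ = d`. Hence `τᵢ(θᵢ(b/d)) - θᵢ(b/d) = b/Dᵢ - b/Dᵢ₊₁`, and the sum telescopes to
`b/(q^s·d) - b/d = b·(q^{-s} - 1)/d = 1/d`.
-/

section ScalingAutomorphisms

variable {F A : Type*} [Field F] [Semiring A] [Algebra F A]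

theorem AlgEquiv.zpow_apply_of_apply_eq_algebraMap_mul (e : A ≃ₐ[F] A) {u : F} (hu : u ≠ 0)
    {a : A} (h : e a = algebraMap F A u * a) (m : ℤ) :
    (e ^ m) a = algebraMap F A (u ^ m) * a := by
  have hsymm : e.symm a = algebraMap F A u⁻¹ * a := by
    conv_rhs => rw [← e.symm_apply_apply a, h, map_mul, AlgEquiv.commutes, ← mul_assoc,
      ← map_mul, inv_mul_cancel₀ hu, map_one, one_mul]
  induction m using Int.induction_on with
  | zero => simp
  | succ k ih =>
    rw [zpow_add_one, AlgEquiv.mul_apply, h, map_mul, AlgEquiv.commutes, ih, ← mul_assoc,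
      ← map_mul, zpow_add_one₀ hu, mul_comm u]
  | pred k ih =>
    rw [zpow_sub_one, AlgEquiv.mul_apply, AlgEquiv.aut_inv, hsymm, map_mul, AlgEquiv.commutes,
      ih, ← mul_assoc, ← map_mul, zpow_sub_one₀ hu, mul_comm u⁻¹]

variable {ι : Type*} (θ : ι → A ≃ₐ[F] A) (x : ι → A) {q : F}

theorem list_prod_map_zpow_apply_of_diagonal [DecidableEq ι] (hq0 : q ≠ 0)
    (hθ : ∀ i, θ i (x i) = algebraMap F A q * x i) (hθfix : ∀ i j, i ≠ j → θ i (x j) = x j)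
    (α : ι → ℤ) (j : ι) (l : List ι) :
    (l.map fun i => θ i ^ α i).prod (x j) = algebraMap F A (q ^ (α j * l.count j)) * x j := by
  induction l with
  | nil => simp
  | cons i l ih =>
    rw [List.map_cons, List.prod_cons, AlgEquiv.mul_apply, ih, map_mul, AlgEquiv.commutes]
    by_cases hij : i = j
    · subst hij
      rw [(θ i).zpow_apply_of_apply_eq_algebraMap_mul hq0 (hθ i), ← mul_assoc, ← map_mul,
        ← zpow_add₀ hq0, List.count_cons_self]
      push_cast
      ring_nf
    · rw [(θ i).zpow_apply_of_apply_eq_algebraMap_mul one_ne_zero (by rw [hθfix i j hij, map_one,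
        one_mul]), one_zpow, map_one, one_mul, List.count_cons_of_ne hij]

theorem thetaPowS_apply_of_diagonal [Fintype ι] (hq0 : q ≠ 0)
    (hθ : ∀ i, θ i (x i) = algebraMap F A q * x i) (hθfix : ∀ i j, i ≠ j → θ i (x j) = x j)
    (α : ι → ℤ) (j : ι) :
    thetaPowS θ α (x j) = algebraMap F A (q ^ α j) * x j := by
  classical
  rw [thetaPowS, list_prod_map_zpow_apply_of_diagonal θ x hq0 hθ hθfix,
    List.count_eq_one_of_mem (Finset.nodup_toList _) (Finset.mem_toList.2 (Finset.mem_univ j))]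
  simp

end ScalingAutomorphisms

section TailShift

variable {F L : Type*} [Field F] [Field L] [Algebra F L] {n : ℕ}

/-- `θᵢ = τᵢ₊₁ ⋯ τₙ`. -/
noncomputable def tailShift (τ : Fin n → L ≃ₐ[F] L) (i : Fin n) : L ≃ₐ[F] L :=
  thetaPowS τ fun l : Fin n => if (i : ℕ) < (l : ℕ) then 1 else 0

/-- `Dₘ`. -/
def shiftedPowerSum (x : Fin n → L) (q : F) (s m : ℕ) : L :=
  ∑ l : Fin n, (if m ≤ (l : ℕ) then algebraMap F L q * x l else x l) ^ s

variable (x : Fin n → L) (q : F) (s : ℕ)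

theorem shiftedPowerSum_zero :
    shiftedPowerSum x q s 0 = algebraMap F L q ^ s * ∑ l : Fin n, x l ^ s := by
  simp [shiftedPowerSum, Finset.mul_sum, mul_pow]

theorem shiftedPowerSum_of_le {m : ℕ} (hm : n ≤ m) :
    shiftedPowerSum x q s m = ∑ l : Fin n, x l ^ s :=
  Finset.sum_congr rfl fun l _ => by rw [if_neg (by omega)]

variable {τ : Fin n → L ≃ₐ[F] L} {x q}
  (hτ : ∀ i, τ i (x i) = algebraMap F L q * x i) (hτfix : ∀ i j, i ≠ j → τ i (x j) = x j)
include hτ hτfix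

theorem tailShift_powerSum (hq0 : q ≠ 0) (i : Fin n) :
    tailShift τ i (∑ l : Fin n, x l ^ s) = shiftedPowerSum x q s (i + 1) := by
  rw [map_sum]
  refine Finset.sum_congr rfl fun l _ => ?_
  rw [map_pow, tailShift, thetaPowS_apply_of_diagonal τ x hq0 hτ hτfix]
  by_cases h : (i : ℕ) < l
  · rw [if_pos h, if_pos (by omega : (i : ℕ) + 1 ≤ l), zpow_one]
  · rw [if_neg h, if_neg (by omega), zpow_zero, map_one, one_mul]

theorem apply_shiftedPowerSum_succ (i : Fin n) :
    τ i (shiftedPowerSum x q s (i + 1)) = shiftedPowerSum x q s i := by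
  rw [shiftedPowerSum, shiftedPowerSum, map_sum]
  refine Finset.sum_congr rfl fun l _ => ?_
  rw [map_pow]
  rcases lt_trichotomy (i : ℕ) l with h | h | h
  · rw [if_pos (by omega : (i : ℕ) + 1 ≤ l), if_pos h.le, map_mul, AlgEquiv.commutes,
      hτfix i l (Fin.ne_of_lt h)]
  · rw [if_neg (by omega), if_pos h.le, Fin.ext h, hτ]
  · rw [if_neg (by omega), if_neg (by omega), hτfix i l (Fin.ne_of_gt h)]

theorem sum_apply_tailShift_sub_tailShift (hq0 : q ≠ 0) (hqs : q ^ (-(s : ℤ)) ≠ 1) :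
    ∑ i : Fin n, (τ i (tailShift τ i (algebraMap F L (q ^ (-(s : ℤ)) - 1)⁻¹ / ∑ l, x l ^ s))
        - tailShift τ i (algebraMap F L (q ^ (-(s : ℤ)) - 1)⁻¹ / ∑ l, x l ^ s))
      = 1 / ∑ l, x l ^ s := by
  set b : F := (q ^ (-(s : ℤ)) - 1)⁻¹
  have hstep : ∀ i : Fin n,
      τ i (tailShift τ i (algebraMap F L b / ∑ l, x l ^ s))
        - tailShift τ i (algebraMap F L b / ∑ l, x l ^ s)
      = algebraMap F L b / shiftedPowerSum x q s i
        - algebraMap F L b / shiftedPowerSum x q s (i + 1) := fun i => by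
    rw [map_div₀, AlgEquiv.commutes, tailShift_powerSum s hτ hτfix hq0, map_div₀,
      AlgEquiv.commutes, apply_shiftedPowerSum_succ s hτ hτfix]
  have hb : b * q ^ (-(s : ℤ)) - b = 1 := by
    rw [← mul_sub_one, inv_mul_cancel₀ (sub_ne_zero.2 hqs)]
  rw [Finset.sum_congr rfl fun i _ => hstep i,
    Fin.sum_univ_eq_sum_range (fun i => algebraMap F L b / shiftedPowerSum x q s i
      - algebraMap F L b / shiftedPowerSum x q s (i + 1)),
    Finset.sum_range_sub', shiftedPowerSum_zero, shiftedPowerSum_of_le x q s le_rfl, ← div_div,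
    ← map_pow, ← map_div₀, div_eq_mul_inv b, ← zpow_natCast, ← zpow_neg, div_sub_div_same,
    ← map_sub, hb, map_one]

end TailShift

theorem stmt_16_general {n : ℕ}
    (q : ℚ) (hq0 : q ≠ 0) (hq : ∀ m : ℤ, m ≠ 0 → q ^ m ≠ 1)
    (τ : Fin n → (MvRat ℚ n ≃ₐ[ℚ] MvRat ℚ n))
    (hτ : ∀ i : Fin n, τ i (xv i) = algebraMap ℚ (MvRat ℚ n) q * xv i)
    (hτfix : ∀ i j : Fin n, i ≠ j → τ i (xv j) = xv j)
    (s : ℕ) (hs : 1 ≤ s) :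
    (∃ g : Fin n → MvRat ℚ n,
      1 / (∑ i : Fin n, xv i ^ s) = ∑ i : Fin n, (τ i (g i) - g i)) ∧
    (1 < n →
      1 / (∑ i : Fin n, xv i ^ s) =
        ∑ i : Fin n,
          (τ i (thetaPowS τ (fun l : Fin n => if (i : ℕ) < (l : ℕ) then 1 else 0)
              (algebraMap ℚ (MvRat ℚ n) (q ^ (-(s : ℤ)) - 1)⁻¹ / ∑ l : Fin n, xv l ^ s))
            - thetaPowS τ (fun l : Fin n => if (i : ℕ) < (l : ℕ) then 1 else 0)
              (algebraMap ℚ (MvRat ℚ n) (q ^ (-(s : ℤ)) - 1)⁻¹ / ∑ l : Fin n, xv l ^ s))) := by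
  have key := sum_apply_tailShift_sub_tailShift s hτ hτfix hq0 (hq _ (by omega))
  exact ⟨⟨_, key.symm⟩, fun _ => key.symm⟩

set_option maxHeartbeats 1000000 in
/-- **Example: q-summability of `1/(x₁^s+⋯+xₙ^s)`.** For all positive
integers `s` and `n`, `f = 1/(x₁^s+⋯+xₙ^s) ∈ ℚ(x₁,…,xₙ)` is
`(τ_{q,x₁},…,τ_{q,xₙ})`-summable; in particular for `n > 1` one may take the witnesses
`gᵢ = τ_{q,x_{i+1}}⋯τ_{q,xₙ}(b/d)` with `b = 1/(q^{−s} − 1)` and `d = x₁^s + ⋯ + xₙ^s`. -/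
theorem stmt_16 {n : ℕ} [NeZero n]
    (q : ℚ) (hq0 : q ≠ 0) (hq : ∀ m : ℤ, m ≠ 0 → q ^ m ≠ 1)
    (τ : Fin n → (MvRat ℚ n ≃ₐ[ℚ] MvRat ℚ n))
    (hτ : ∀ i : Fin n, τ i (xv i) = algebraMap ℚ (MvRat ℚ n) q * xv i)
    (hτfix : ∀ i j : Fin n, i ≠ j → τ i (xv j) = xv j)
    (s : ℕ) (hs : 1 ≤ s) :
    (∃ g : Fin n → MvRat ℚ n,
      1 / (∑ i : Fin n, xv i ^ s) = ∑ i : Fin n, (τ i (g i) - g i)) ∧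
    (1 < n →
      1 / (∑ i : Fin n, xv i ^ s) =
        ∑ i : Fin n,
          (τ i (thetaPowS τ (fun l : Fin n => if (i : ℕ) < (l : ℕ) then 1 else 0)
              (algebraMap ℚ (MvRat ℚ n) (q ^ (-(s : ℤ)) - 1)⁻¹ / ∑ l : Fin n, xv l ^ s))
            - thetaPowS τ (fun l : Fin n => if (i : ℕ) < (l : ℕ) then 1 else 0)
              (algebraMap ℚ (MvRat ℚ n) (q ^ (-(s : ℤ)) - 1)⁻¹ / ∑ l : Fin n, xv l ^ s))) :=
  stmt_16_general q hq0 hq τ hτ hτfix s hs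
end

section
/- Let θ be an automorphism of a field L, let c ∈ L be nonzero with θ(c) = c, let a, b ∈ L with b ≠ 0, and let ℓ be a nonzero integer. Then a/θ^ℓ(b) = c·θ(g) − g + c^{−ℓ}·θ^{−ℓ}(a)/b, where g = Σ_{i=0}^{ℓ−1} c^{i−ℓ}·θ^{i−ℓ}(a)/θ^i(b) if ℓ > 0, and g = −Σ_{i=0}^{−ℓ−1} c^i·θ^i(a)/θ^{ℓ+i}(b) if ℓ < 0. -/
/-- **Reduction formula.** Let `θ` be an automorphism of a field `L`, `c ∈ L` nonzero with
`θ(c) = c`, `a, b ∈ L` with `b ≠ 0`, and `ℓ` a nonzero integer. Then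
`a/θ^ℓ(b) = c·θ(g) − g + c^{−ℓ}·θ^{−ℓ}(a)/b`, where
`g = Σ_{i=0}^{ℓ−1} c^{i−ℓ}·θ^{i−ℓ}(a)/θ^i(b)` if `ℓ > 0` and
`g = −Σ_{i=0}^{−ℓ−1} c^i·θ^i(a)/θ^{ℓ+i}(b)` if `ℓ < 0`. -/
theorem stmt_17 {L : Type*} [Field L] (θ : L ≃+* L) (c : L) (hc : c ≠ 0) (hθc : θ c = c)
    (a b : L) (hb : b ≠ 0) (ℓ : ℤ) (hℓ : ℓ ≠ 0) :
    (0 < ℓ →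
      a / (θ ^ ℓ) b =
        c * θ (∑ i ∈ Finset.range ℓ.toNat,
            c ^ ((i : ℤ) - ℓ) * (θ ^ ((i : ℤ) - ℓ)) a / (θ ^ (i : ℤ)) b)
          - (∑ i ∈ Finset.range ℓ.toNat,
            c ^ ((i : ℤ) - ℓ) * (θ ^ ((i : ℤ) - ℓ)) a / (θ ^ (i : ℤ)) b)
          + c ^ (-ℓ) * (θ ^ (-ℓ)) a / b) ∧
    (ℓ < 0 →
      a / (θ ^ ℓ) b =
        c * θ (-∑ i ∈ Finset.range (-ℓ).toNat,
            c ^ (i : ℤ) * (θ ^ (i : ℤ)) a / (θ ^ (ℓ + (i : ℤ))) b)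
          - (-∑ i ∈ Finset.range (-ℓ).toNat,
            c ^ (i : ℤ) * (θ ^ (i : ℤ)) a / (θ ^ (ℓ + (i : ℤ))) b)
          + c ^ (-ℓ) * (θ ^ (-ℓ)) a / b) := by
  have hshift : ∀ (k : ℤ) (x : L), θ ((θ ^ k) x) = (θ ^ (k + 1)) x := by
    intro k x; rw [add_comm, zpow_add, zpow_one]; rfl
  have step : ∀ k m : ℤ,
      c * θ (c ^ k * (θ ^ k) a / (θ ^ m) b) =
        c ^ (k + 1) * (θ ^ (k + 1)) a / (θ ^ (m + 1)) b := by
    intro k m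
    rw [map_div₀, map_mul, map_zpow₀, hθc, hshift, hshift, zpow_add_one₀ hc]
    ring
  constructor
  · intro hl
    set n := ℓ.toNat with hn
    have hnl : (n : ℤ) = ℓ := Int.toNat_of_nonneg hl.le
    set T : ℕ → L := fun i => c ^ ((i : ℤ) - ℓ) * (θ ^ ((i : ℤ) - ℓ)) a / (θ ^ (i : ℤ)) b with hT
    have hTstep : ∀ i : ℕ, c * θ (T i) = T (i + 1) := by
      intro i
      simp only [hT, step ((i : ℤ) - ℓ) (i : ℤ)]
      push_cast
      ring_nf
    have key : c * θ (∑ i ∈ Finset.range n, T i) - ∑ i ∈ Finset.range n, T i = T n - T 0 := by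
      rw [map_sum, Finset.mul_sum]
      simp only [hTstep]
      rw [← Finset.sum_sub_distrib]; exact Finset.sum_range_sub T n
    have hTn : T n = a / (θ ^ ℓ) b := by
      simp only [hT]
      rw [hnl, sub_self, zpow_zero, one_mul]
      rfl
    have hT0 : T 0 = c ^ (-ℓ) * (θ ^ (-ℓ)) a / b := by
      simp only [hT, Nat.cast_zero, zero_sub, zpow_zero]
      rfl
    rw [key, hTn, hT0]
    ring
  · intro hl
    set n := (-ℓ).toNat with hn
    have hnl : (n : ℤ) = -ℓ := Int.toNat_of_nonneg (by omega)
    set S : ℕ → L := fun i => c ^ (i : ℤ) * (θ ^ (i : ℤ)) a / (θ ^ (ℓ + (i : ℤ))) b with hS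
    have hSstep : ∀ i : ℕ, c * θ (S i) = S (i + 1) := by
      intro i
      simp only [hS, step (i : ℤ) (ℓ + (i : ℤ))]
      push_cast
      ring_nf
    have key : c * θ (-∑ i ∈ Finset.range n, S i) - (-∑ i ∈ Finset.range n, S i)
        = S 0 - S n := by
      rw [map_neg, mul_neg, sub_neg_eq_add, map_sum, Finset.mul_sum]
      simp only [hSstep]
      have := Finset.sum_range_sub S n
      -- -(∑ S(i+1)) + ∑ S i = -(∑ (S(i+1) - S i)) = -(S n - S 0)
      have h2 : ∑ i ∈ Finset.range n, S (i + 1) - ∑ i ∈ Finset.range n, S i = S n - S 0 := by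
        rw [← Finset.sum_sub_distrib]; exact Finset.sum_range_sub S n
      linear_combination -h2
    have hS0 : S 0 = a / (θ ^ ℓ) b := by
      simp only [hS, Nat.cast_zero, zpow_zero, add_zero, one_mul]
      rfl
    have hSn : S n = c ^ (-ℓ) * (θ ^ (-ℓ)) a / b := by
      simp only [hS]
      rw [hnl, add_neg_cancel, zpow_zero]
      rfl
    rw [key, hS0, hSn]
    ring
end
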